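/- The operator α_0 acts on the charge-m subspace F^(m) as multiplication by m: for every semi-infinite monomial φ of charge m, α_0(φ) = m·φ. -/

import Mathlib

open Finsupp

/-- A semi-infinite monomial: a strictly decreasing sequence `seq : ℕ → ℤ` such that
for some `m : ℤ` (its charge) one has `seq k = m - k` for all sufficiently large `k`. -/
structure SIM : Type where
  seq : ℕ → ℤ
  anti : StrictAnti seq
  ex_charge : ∃ m : ℤ, ∃ N : ℕ, ∀ k, N ≤ k → seq k = m - (k : ℤ)

/-- Full fermionic Fock space: the free `ℂ`-vector space on the set of all
semi-infinite monomials. -/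
abbrev FockF : Type := SIM →₀ ℂ

namespace SIM

/-- `φ` is a semi-infinite monomial of charge `m`. -/
def HasCharge (φ : SIM) (m : ℤ) : Prop := ∃ N : ℕ, ∀ k, N ≤ k → φ.seq k = m - (k : ℤ)

theorem exists_lt (φ : SIM) (j : ℤ) : ∃ n : ℕ, φ.seq n < j := by
  obtain ⟨m, N, hN⟩ := φ.ex_charge
  refine ⟨N + (m - j).toNat + 1, ?_⟩
  have h1 := hN (N + (m - j).toNat + 1) (by omega)
  omega

/-- The position at which `j` is inserted into `φ`: the least `n` with `φ.seq n < j`.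
If `i_s > j > i_{s+1}` this equals `s + 1`, and it equals `0` if `j > i_0`. -/
noncomputable def wedgePos (φ : SIM) (j : ℤ) : ℕ := Nat.find (φ.exists_lt j)

/-- The semi-infinite monomial obtained from `φ` by inserting `j` (assuming `j` does not
occur in `φ`). -/
noncomputable def insertSIM (φ : SIM) (j : ℤ) (hj : ∀ s, φ.seq s ≠ j) : SIM where
  seq k := if k < φ.wedgePos j then φ.seq k else if k = φ.wedgePos j then j else φ.seq (k - 1)
  anti := by
    have hs : φ.seq (φ.wedgePos j) < j := Nat.find_spec (φ.exists_lt j)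
    have hm : ∀ k, k < φ.wedgePos j → j < φ.seq k := by
      intro k hk
      have h1 := Nat.find_min (φ.exists_lt j) hk
      have h2 := hj k
      omega
    have ha : ∀ a b : ℕ, a < b → φ.seq b < φ.seq a := fun a b h => φ.anti h
    apply strictAnti_nat_of_succ_lt
    intro k
    try dsimp only
    rcases lt_trichotomy k (φ.wedgePos j) with hk | hk | hk
    · rcases Nat.lt_or_ge (k + 1) (φ.wedgePos j) with hk1 | hk1
      · rw [if_pos hk, if_pos hk1]
        exact ha k (k + 1) (by omega)
      · have hk1' : k + 1 = φ.wedgePos j := by omega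
        rw [if_pos hk, if_neg (by omega), if_pos hk1']
        exact hm k hk
    · rw [if_neg (by omega), if_neg (by omega), if_neg (by omega), if_pos hk,
        (by omega : k + 1 - 1 = k), hk]
      exact hs
    · rw [if_neg (by omega), if_neg (by omega), if_neg (by omega), if_neg (by omega),
        (by omega : k + 1 - 1 = k)]
      exact ha (k - 1) k (by omega)
  ex_charge := by
    obtain ⟨m, N, hN⟩ := φ.ex_charge
    refine ⟨m + 1, N + φ.wedgePos j + 1, fun k hk => ?_⟩
    try dsimp only
    rw [if_neg (by omega), if_neg (by omega)]
    have h3 := hN (k - 1) (by omega)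
    omega

/-- The semi-infinite monomial obtained from `φ` by deleting the entry in position `s`. -/
noncomputable def removeSIM (φ : SIM) (s : ℕ) : SIM where
  seq k := if k < s then φ.seq k else φ.seq (k + 1)
  anti := by
    apply strictAnti_nat_of_succ_lt
    intro k
    try dsimp only
    split_ifs <;> exact φ.anti (by omega)
  ex_charge := by
    obtain ⟨m, N, hN⟩ := φ.ex_charge
    refine ⟨m - 1, N + s, fun k hk => ?_⟩
    try dsimp only
    rw [if_neg (by omega)]
    have h3 := hN (k + 1) (by omega)
    omega

end SIM

open Classical in
/-- The wedging operator `ψ_j` on full fermionic Fock space.  On a basis element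
`φ = (i_0, i_1, ...)` it is `0` if `j = i_s` for some `s`, and otherwise it is
`(-1)^n` times the basis element obtained by inserting `j` in position `n`
(so `(-1)^{s+1}` when `i_s > j > i_{s+1}`, and `+1` when `j > i_0`). -/
noncomputable def psi (j : ℤ) : FockF →ₗ[ℂ] FockF :=
  Finsupp.lift FockF ℂ SIM fun φ =>
    if hj : ∀ s, φ.seq s ≠ j then
      ((-1 : ℂ) ^ (φ.wedgePos j)) • Finsupp.single (φ.insertSIM j hj) 1
    else 0

open Classical in
/-- The contracting operator `ψ_j^*` on full fermionic Fock space.  On a basis element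
`φ = (i_0, i_1, ...)` it is `0` if `j ≠ i_s` for all `s`, and `(-1)^s` times the basis
element obtained by deleting `i_s` if `j = i_s`. -/
noncomputable def psiStar (j : ℤ) : FockF →ₗ[ℂ] FockF :=
  Finsupp.lift FockF ℂ SIM fun φ =>
    if hj : ∃ s, φ.seq s = j then
      ((-1 : ℂ) ^ hj.choose) • Finsupp.single (φ.removeSIM hj.choose) 1
    else 0

open Classical in
/-- The free bosons `α_n` on full fermionic Fock space, defined on each basis vector `φ` by
`α_n φ = Σ_{j ∈ ℤ} ψ_j ψ_{j+n}^*(φ)` for `n ≠ 0` and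
`α_0 φ = Σ_{j > 0} ψ_j ψ_j^*(φ) − Σ_{j ≤ 0} ψ_j^* ψ_j(φ)` (all sums are finite). -/
noncomputable def alpha (n : ℤ) : FockF →ₗ[ℂ] FockF :=
  Finsupp.lift FockF ℂ SIM fun φ =>
    if n = 0 then
      (∑ᶠ (j : ℤ) (_ : 0 < j), psi j (psiStar j (Finsupp.single φ 1))) -
        ∑ᶠ (j : ℤ) (_ : j ≤ 0), psiStar j (psi j (Finsupp.single φ 1))
    else ∑ᶠ j : ℤ, psi j (psiStar (j + n) (Finsupp.single φ 1))

/-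
`ψ_j ψ_j^*` fixes `φ` when `j` occurs in `φ` and kills it otherwise, while `ψ_j^* ψ_j` does the
opposite, the two signs `(-1)^s` cancelling because `j` is removed from and reinserted at the same
position. Hence `α_0 φ = (P - M) φ`, where `P` counts the positive entries of `φ` and `M` the
non-positive integers missing from `φ`. If `φ.seq k = m - k` for `k ≥ K ≥ m`, the `K` entries above
`m - K` split into `P` positive ones and `K - m - M` lying in `(m - K, 0]`, so `P - M = m`.
-/

theorem finsum_mem_ite_eq_card_smul {α M : Type*} [AddCommMonoid M] {p q : α → Prop}
    [DecidablePred q] (s : Finset α) (hs : ∀ a, a ∈ s ↔ p a ∧ q a) (v : M) :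
    ∑ᶠ (a) (_ : p a), (if q a then v else 0) = s.card • v := by
  classical
  calc ∑ᶠ (a) (_ : p a), (if q a then v else 0)
      = ∑ᶠ a ∈ (s : Set α), v := by
        refine finsum_congr fun a => ?_
        simp only [finsum_eq_if, Finset.mem_coe, hs, ite_and]
    _ = s.card • v := by rw [finsum_mem_coe_finset, Finset.sum_const]

namespace SIM

@[ext]
theorem ext {a b : SIM} (h : a.seq = b.seq) : a = b := by
  cases a; cases b; cases h; rfl

variable (φ : SIM)

theorem removeSIM_seq_ne {j : ℤ} {s : ℕ} (hs : φ.seq s = j) (t : ℕ) :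
    (φ.removeSIM s).seq t ≠ j := by
  show (if t < s then φ.seq t else φ.seq (t + 1)) ≠ j
  rw [← hs]
  split_ifs <;> exact fun h => by have := φ.anti.injective h; omega

theorem wedgePos_removeSIM {j : ℤ} {s : ℕ} (hs : φ.seq s = j) :
    (φ.removeSIM s).wedgePos j = s := by
  rw [wedgePos, Nat.find_eq_iff]
  refine ⟨?_, fun k hk => ?_⟩
  · show (if s < s then _ else φ.seq (s + 1)) < j
    rw [if_neg (lt_irrefl s), ← hs]
    exact φ.anti (Nat.lt_succ_self s)
  · show ¬ (if k < s then φ.seq k else _) < j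
    rw [if_pos hk, ← hs]
    exact not_lt.mpr (φ.anti hk).le

theorem insertSIM_removeSIM {j : ℤ} {s : ℕ} (hs : φ.seq s = j) :
    (φ.removeSIM s).insertSIM j (φ.removeSIM_seq_ne hs) = φ := by
  ext k
  simp only [insertSIM]
  rw [wedgePos_removeSIM φ hs]
  simp only [removeSIM]
  rcases lt_trichotomy k s with hlt | rfl | hgt
  · rw [if_pos hlt, if_pos hlt]
  · rw [if_neg (lt_irrefl k), if_pos rfl, hs]
  · rw [if_neg (by omega), if_neg (by omega), if_neg (by omega), Nat.sub_add_cancel (by omega)]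

theorem insertSIM_seq_wedgePos {j : ℤ} (hj : ∀ s, φ.seq s ≠ j) :
    (φ.insertSIM j hj).seq (φ.wedgePos j) = j := by
  simp [insertSIM]

theorem removeSIM_insertSIM {j : ℤ} (hj : ∀ s, φ.seq s ≠ j) :
    (φ.insertSIM j hj).removeSIM (φ.wedgePos j) = φ := by
  ext k
  simp only [removeSIM, insertSIM]
  rcases lt_or_ge k (φ.wedgePos j) with hlt | hge
  · rw [if_pos hlt, if_pos hlt]
  · rw [if_neg (by omega), if_neg (by omega), if_neg (by omega), Nat.add_sub_cancel]

variable {φ} {m : ℤ} {K : ℕ}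

theorem mem_range_seq_of_le (hK : ∀ k, K ≤ k → φ.seq k = m - k) {j : ℤ} (hj : j ≤ m - K) :
    j ∈ Set.range φ.seq :=
  ⟨(m - j).toNat, by rw [hK _ (by omega)]; omega⟩

theorem mem_image_range_iff (hK : ∀ k, K ≤ k → φ.seq k = m - k) (j : ℤ) :
    j ∈ (Finset.range K).image φ.seq ↔ m - K < j ∧ j ∈ Set.range φ.seq := by
  have hseqK := hK K le_rfl
  simp only [Finset.mem_image, Finset.mem_range, Set.mem_range]
  constructor
  · rintro ⟨k, hk, rfl⟩
    exact ⟨hseqK ▸ φ.anti hk, k, rfl⟩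
  · rintro ⟨hj, k, rfl⟩
    refine ⟨k, lt_of_not_ge fun hk => ?_, rfl⟩
    have := φ.anti.antitone hk
    omega

theorem HasCharge.exists_window (h : φ.HasCharge m) :
    ∃ K : ℕ, m ≤ K ∧ ∀ k, K ≤ k → φ.seq k = m - k := by
  obtain ⟨N, hN⟩ := h
  exact ⟨N + m.toNat, by omega, fun k hk => hN k (by omega)⟩

theorem HasCharge.exists_card_sub_card_eq (h : φ.HasCharge m) :
    ∃ P M : Finset ℤ, (∀ j, j ∈ P ↔ 0 < j ∧ j ∈ Set.range φ.seq) ∧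
      (∀ j, j ∈ M ↔ j ≤ 0 ∧ j ∉ Set.range φ.seq) ∧ (P.card : ℤ) - M.card = m := by
  obtain ⟨K, hmK, hK⟩ := h.exists_window
  obtain ⟨U, hU, hUcard⟩ : ∃ U : Finset ℤ, (∀ j, j ∈ U ↔ m - K < j ∧ j ∈ Set.range φ.seq) ∧
      U.card = K :=
    ⟨_, mem_image_range_iff hK, by
      rw [Finset.card_image_of_injective _ φ.anti.injective, Finset.card_range]⟩
  have hQ : U.filter (¬ 0 < ·) ⊆ Finset.Ioc (m - K) 0 := fun j hj => by
    simp only [Finset.mem_filter, hU] at hj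
    exact Finset.mem_Ioc.mpr ⟨hj.1.1, not_lt.mp hj.2⟩
  refine ⟨U.filter (0 < ·), Finset.Ioc (m - K) 0 \ U.filter (¬ 0 < ·), fun j => ?_, fun j => ?_, ?_⟩
  · simp only [Finset.mem_filter, hU]
    constructor
    · exact fun h => ⟨h.2, h.1.2⟩
    · exact fun h => ⟨⟨by omega, h.2⟩, h.1⟩
  · simp only [Finset.mem_sdiff, Finset.mem_Ioc, Finset.mem_filter, hU, not_and, not_lt]
    constructor
    · exact fun h => ⟨h.1.2, fun hj => h.2 ⟨h.1.1, hj⟩ h.1.2⟩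
    · refine fun h => ⟨⟨lt_of_not_ge fun hj => h.2 (mem_range_seq_of_le hK hj), h.1⟩,
        fun hj => absurd hj.2 h.2⟩
  · have hsplit := Finset.card_filter_add_card_filter_not (s := U) (0 < ·)
    rw [Finset.card_sdiff_of_subset hQ, Int.card_Ioc]
    have := Finset.card_le_card hQ
    rw [Int.card_Ioc] at this
    omega

end SIM

open Classical in
theorem psi_single (j : ℤ) (φ : SIM) :
    psi j (Finsupp.single φ 1) =
      if hj : ∀ s, φ.seq s ≠ j then
        ((-1 : ℂ) ^ φ.wedgePos j) • Finsupp.single (φ.insertSIM j hj) 1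
      else 0 := by
  rw [psi, Finsupp.lift_apply, Finsupp.sum_single_index (by simp), one_smul]

open Classical in
theorem psiStar_single (j : ℤ) (φ : SIM) :
    psiStar j (Finsupp.single φ 1) =
      if hj : ∃ s, φ.seq s = j then
        ((-1 : ℂ) ^ hj.choose) • Finsupp.single (φ.removeSIM hj.choose) 1
      else 0 := by
  rw [psiStar, Finsupp.lift_apply, Finsupp.sum_single_index (by simp), one_smul]

theorem alpha_zero_single (φ : SIM) :
    alpha 0 (Finsupp.single φ 1) =
      (∑ᶠ (j : ℤ) (_ : 0 < j), psi j (psiStar j (Finsupp.single φ 1))) -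
        ∑ᶠ (j : ℤ) (_ : j ≤ 0), psiStar j (psi j (Finsupp.single φ 1)) := by
  simp [alpha]

open Classical in
theorem psi_psiStar_single (j : ℤ) (φ : SIM) :
    psi j (psiStar j (Finsupp.single φ 1)) =
      if j ∈ Set.range φ.seq then Finsupp.single φ 1 else 0 := by
  rw [psiStar_single]
  simp only [Set.mem_range]
  split_ifs with hj
  · have hs : φ.seq hj.choose = j := hj.choose_spec
    rw [map_smul, psi_single, dif_pos (φ.removeSIM_seq_ne hs), φ.wedgePos_removeSIM hs,
      φ.insertSIM_removeSIM hs, smul_smul, ← mul_pow, neg_one_mul, neg_neg, one_pow, one_smul]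
  · exact map_zero _

open Classical in
theorem psiStar_psi_single (j : ℤ) (φ : SIM) :
    psiStar j (psi j (Finsupp.single φ 1)) =
      if j ∉ Set.range φ.seq then Finsupp.single φ 1 else 0 := by
  rw [psi_single]
  simp only [Set.mem_range, not_exists]
  split_ifs with hj
  · have hmem : ∃ s, (φ.insertSIM j hj).seq s = j := ⟨_, φ.insertSIM_seq_wedgePos hj⟩
    have hs : hmem.choose = φ.wedgePos j :=
      (φ.insertSIM j hj).anti.injective (hmem.choose_spec.trans (φ.insertSIM_seq_wedgePos hj).symm)
    rw [map_smul, psiStar_single, dif_pos hmem, hs, φ.removeSIM_insertSIM hj, smul_smul,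
      ← mul_pow, neg_one_mul, neg_neg, one_pow, one_smul]
  · exact map_zero _

/-- the operator `α_0` acts on the charge-`m` subspace `F^{(m)}` as
multiplication by `m`: for every semi-infinite monomial `φ` of charge `m`,
`α_0(φ) = m · φ`. -/
theorem alpha_zero_charge (m : ℤ) (φ : SIM) (h : φ.HasCharge m) :
    alpha 0 (Finsupp.single φ 1) = (m : ℂ) • Finsupp.single φ 1 := by
  classical
  obtain ⟨P, M, hP, hM, hcard⟩ := h.exists_card_sub_card_eq
  rw [alpha_zero_single]
  simp_rw [psi_psiStar_single, psiStar_psi_single]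
  rw [finsum_mem_ite_eq_card_smul P hP, finsum_mem_ite_eq_card_smul M hM,
    ← Nat.cast_smul_eq_nsmul ℂ, ← Nat.cast_smul_eq_nsmul ℂ, ← sub_smul, ← hcard, Int.cast_sub,
    Int.cast_natCast, Int.cast_natCast]
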